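/- Let G be a finite simple graph with surplus(G) ≥ 1, and let Z be a nonempty independent set of G with |N(Z)| = |Z| + 1. Then LP(G − (Z ∪ N(Z))) ≥ LP(G) − |N(Z)| + 1/2. -/

import Mathlib

open scoped Classical

/-- A fractional vertex cover of `G`. -/
def IsFVC {V : Type} (G : SimpleGraph V) (x : V → ℝ) : Prop :=
  (∀ v, 0 ≤ x v ∧ x v ≤ 1) ∧ ∀ ⦃u v⦄, G.Adj u v → 1 ≤ x u + x v

/-- The weight of a fractional vertex cover. -/
noncomputable def fvcWeight {V : Type} [Fintype V] (x : V → ℝ) : ℝ := ∑ v, x v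

/-- `LP(G)`: the minimum weight of a fractional vertex cover of `G`. -/
noncomputable def LPopt {V : Type} [Fintype V] (G : SimpleGraph V) : ℝ :=
  sInf {w : ℝ | ∃ x : V → ℝ, IsFVC G x ∧ w = fvcWeight x}

/-- A matching of `G`: a set of pairwise vertex-disjoint edges of `G`. -/
def IsMatchingSet {V : Type} (G : SimpleGraph V) (M : Finset (Sym2 V)) : Prop :=
  (∀ e ∈ M, e ∈ G.edgeSet) ∧ ∀ e ∈ M, ∀ f ∈ M, e ≠ f → ∀ v : V, v ∈ e → v ∉ f

/-- `MM(G)`: the maximum size of a matching of `G`. -/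
noncomputable def MMnum {V : Type} (G : SimpleGraph V) : ℕ :=
  sSup {n : ℕ | ∃ M : Finset (Sym2 V), IsMatchingSet G M ∧ M.card = n}

/-- `OPT(G)`: the minimum size of a vertex cover of `G`. -/
noncomputable def VCnum {V : Type} (G : SimpleGraph V) : ℕ :=
  sInf {n : ℕ | ∃ S : Finset V, (∀ ⦃u v⦄, G.Adj u v → u ∈ S ∨ v ∈ S) ∧ S.card = n}

/-- `N(X)`: the set of vertices outside `X` having a neighbour in `X`. -/
def nbhd {V : Type} (G : SimpleGraph V) (X : Set V) : Set V :=
  {v | v ∉ X ∧ ∃ u ∈ X, G.Adj u v}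

/-- `X` is an independent set in `G`. -/
def IndepSet {V : Type} (G : SimpleGraph V) (X : Set V) : Prop :=
  ∀ u ∈ X, ∀ v ∈ X, ¬ G.Adj u v

/-- `surplus(G) ≥ s`: every nonempty independent set `X` satisfies `|N(X)| ≥ |X| + s`. -/
def SurplusGE {V : Type} (G : SimpleGraph V) (s : ℕ) : Prop :=
  ∀ X : Set V, X.Nonempty → IndepSet G X → X.ncard + s ≤ (nbhd G X).ncard

/-- The matching `M` saturates the vertex `v`. -/
def Saturates {V : Type} (M : Finset (Sym2 V)) (v : V) : Prop := ∃ e ∈ M, v ∈ e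

/-- `O(G)`: vertices left unsaturated by some maximum matching of `G`. -/
def OSet {V : Type} (G : SimpleGraph V) : Set V :=
  {v | ∃ M : Finset (Sym2 V), IsMatchingSet G M ∧ M.card = MMnum G ∧ ¬ Saturates M v}

/-- `I(G)`: vertices outside `O(G)` having a neighbour in `O(G)`. -/
def ISet {V : Type} (G : SimpleGraph V) : Set V := nbhd G (OSet G)

/-- `P(G)`: the remaining vertices. -/
def GEPSet {V : Type} (G : SimpleGraph V) : Set V := (OSet G ∪ ISet G)ᶜ

/-!
Extend a fractional cover `y` of `G − (Z ∪ N(Z))` by `1/2` on `Z ∪ N(Z)`, a set of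
`2|N(Z)| - 1` vertices. The vertices where the extension drops below `1/2` form an independent
set `B` outside `Z ∪ N(Z)`. For `T ⊆ B` the surplus condition applied to `Z ∪ T` shows that `T`
has at least `|T|` neighbours outside `Z ∪ N(Z)`, so by Hall's theorem `B` can be matched into
them. Raising `B` and lowering its partners to `1/2` costs nothing, since every matched edge
already carries weight at least `1`, and produces a cover of `G` with values in `[1/2, 1]`.
Hence `LP(G) ≤ |N(Z)| - 1/2 + weight(y)`.
-/

section

variable {V : Type}

theorem isFVC_of_forall_half_le {G : SimpleGraph V} {x : V → ℝ}
    (hx : ∀ v, 1 / 2 ≤ x v ∧ x v ≤ 1) : IsFVC G x :=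
  ⟨fun v => ⟨by linarith [hx v], (hx v).2⟩, fun u v _ => by linarith [(hx u).1, (hx v).1]⟩

theorem LPopt_le_fvcWeight [Fintype V] {G : SimpleGraph V} {x : V → ℝ} (hx : IsFVC G x) :
    LPopt G ≤ fvcWeight x :=
  csInf_le ⟨0, by rintro _ ⟨y, hy, rfl⟩; exact Finset.sum_nonneg fun v _ => (hy.1 v).1⟩
    ⟨x, hx, rfl⟩

theorem le_LPopt [Fintype V] {G : SimpleGraph V} {c : ℝ}
    (h : ∀ x, IsFVC G x → c ≤ fvcWeight x) : c ≤ LPopt G :=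
  le_csInf ⟨_, fun _ => 1, isFVC_of_forall_half_le fun _ => by norm_num, rfl⟩
    (by rintro _ ⟨x, hx, rfl⟩; exact h x hx)

theorem exists_half_le_sum_le_of_injective {W : Type} [Fintype W] (x : W → ℝ)
    (hx : ∀ v, x v ≤ 1) (f : {v // x v < 1 / 2} → W) (hf : Function.Injective f)
    (hcover : ∀ a : {v // x v < 1 / 2}, 1 ≤ x a + x (f a)) :
    ∃ z : W → ℝ, (∀ v, 1 / 2 ≤ z v ∧ z v ≤ 1) ∧ ∑ v, z v ≤ ∑ v, x v := by
  set e : {v // x v < 1 / 2} ⊕ {v // x v < 1 / 2} → W := Sum.elim Subtype.val f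
  have he : Function.Injective e := by
    refine Subtype.val_injective.sumElim hf fun a b hab => ?_
    have ha : x (f b) < 1 / 2 := hab ▸ a.2
    linarith [hcover b, b.2]
  set z : W → ℝ := fun v => if v ∈ Set.range e then 1 / 2 else x v
  refine ⟨z, fun v => ?_, ?_⟩
  · by_cases hv : v ∈ Set.range e
    · simp only [z, if_pos hv]
      norm_num
    · simp only [z, if_neg hv]
      exact ⟨not_lt.1 fun hlt => hv ⟨.inl ⟨v, hlt⟩, rfl⟩, hx v⟩
  · have hz : ∀ i, z (e i) = 1 / 2 := fun i => if_pos ⟨i, rfl⟩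
    rw [← sub_nonpos, ← Finset.sum_sub_distrib]
    calc ∑ v, (z v - x v) = ∑ v ∈ Finset.univ.image e, (z v - x v) := by
          refine (Finset.sum_subset (Finset.subset_univ _) fun v _ hv => ?_).symm
          have : v ∉ Set.range e := by simpa using hv
          simp only [z, if_neg this, sub_self]
      _ = ∑ a : {v // x v < 1 / 2}, ((1 / 2 - x a) + (1 / 2 - x (f a))) := by
          rw [Finset.sum_image fun i _ j _ hij => he hij, Fintype.sum_sum_type]
          simp only [hz]
          exact (Finset.sum_add_distrib).symm
      _ ≤ 0 := Finset.sum_nonpos fun a _ => by linarith [hcover a]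

theorem exists_injective_adj_of_forall_ncard_le [Fintype V] {G : SimpleGraph V} {B R : Set V}
    (hall : ∀ T ⊆ B, T.ncard ≤ (nbhd G T ∩ R).ncard) :
    ∃ f : B → V, Function.Injective f ∧ ∀ a, f a ∈ R ∧ G.Adj a (f a) := by
  refine (Fintype.all_card_le_filter_rel_iff_exists_injective
    (fun (a : B) w => w ∈ R ∧ G.Adj a w)).1 fun A => ?_
  calc A.card = (Subtype.val '' (A : Set B)).ncard := by
        rw [Set.ncard_image_of_injective _ Subtype.val_injective, Set.ncard_coe_finset]
    _ ≤ (nbhd G (Subtype.val '' (A : Set B)) ∩ R).ncard := hall _ (by simp)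
    _ ≤ _ := by
        rw [← Set.ncard_coe_finset]
        refine Set.ncard_le_ncard ?_
        rintro w ⟨⟨-, _, ⟨a, ha, rfl⟩, hadj⟩, hwR⟩
        exact Finset.mem_filter.2 ⟨Finset.mem_univ _, a, ha, hwR, hadj⟩

theorem ncard_le_ncard_nbhd_inter_of_surplus [Finite V] {G : SimpleGraph V} {s : ℕ}
    (hsur : SurplusGE G s) {Z : Set V} (hZind : IndepSet G Z)
    (hZ : (nbhd G Z).ncard ≤ Z.ncard + s) {T : Set V} (hTR : T ⊆ (Z ∪ nbhd G Z)ᶜ)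
    (hTind : IndepSet G T) : T.ncard ≤ (nbhd G T ∩ (Z ∪ nbhd G Z)ᶜ).ncard := by
  rcases T.eq_empty_or_nonempty with rfl | hTne
  · simp
  have hZT : ∀ u ∈ Z, ∀ v ∈ T, ¬ G.Adj u v := fun u hu v hv hadj =>
    hTR hv (.inr ⟨fun hvZ => hTR hv (.inl hvZ), u, hu, hadj⟩)
  have hind : IndepSet G (Z ∪ T) := by
    rintro u (hu | hu) v (hv | hv)
    exacts [hZind u hu v hv, hZT u hu v hv, fun h => hZT v hv u hu h.symm, hTind u hu v hv]
  have hcard : (Z ∪ T).ncard = Z.ncard + T.ncard :=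
    Set.ncard_union_eq (Set.disjoint_right.2 fun v hv hvZ => hTR hv (.inl hvZ))
  have hsub : nbhd G (Z ∪ T) ⊆ nbhd G Z ∪ (nbhd G T ∩ (Z ∪ nbhd G Z)ᶜ) := by
    rintro w ⟨hw, u, hu | hu, hadj⟩
    · exact .inl ⟨fun h => hw (.inl h), u, hu, hadj⟩
    · by_cases hwN : w ∈ nbhd G Z
      · exact .inl hwN
      · exact .inr ⟨⟨fun h => hw (.inr h), u, hu, hadj⟩,
          fun h => h.elim (fun h' => hw (.inl h')) hwN⟩
  have := hsur _ (hTne.mono Set.subset_union_right) hind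
  have := (Set.ncard_le_ncard hsub).trans (Set.ncard_union_le _ _)
  omega

section extendByConst

variable (R : Set V) (y : R → ℝ) (c : ℝ)

noncomputable def extendByConst : V → ℝ := fun v => if h : v ∈ R then y ⟨v, h⟩ else c

variable {R y c}

theorem extendByConst_le {b : ℝ} (hy : ∀ v, y v ≤ b) (hc : c ≤ b) (v : V) :
    extendByConst R y c v ≤ b := by
  unfold extendByConst
  split_ifs
  exacts [hy _, hc]

theorem extendByConst_of_notMem {v : V} (hv : v ∉ R) : extendByConst R y c v = c :=
  dif_neg hv

theorem mem_of_extendByConst_lt {v : V} (hv : extendByConst R y c v < c) : v ∈ R := by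
  by_contra h
  exact hv.ne (extendByConst_of_notMem h)

theorem extendByConst_of_mem {v : V} (hv : v ∈ R) : extendByConst R y c v = y ⟨v, hv⟩ :=
  dif_pos hv

theorem one_le_extendByConst_add {G : SimpleGraph V} (hy : IsFVC (G.induce R) y) {u v : V}
    (hu : u ∈ R) (hv : v ∈ R) (huv : G.Adj u v) :
    1 ≤ extendByConst R y c u + extendByConst R y c v := by
  rw [extendByConst_of_mem hu, extendByConst_of_mem hv]
  exact hy.2 huv

theorem fvcWeight_extendByConst [Fintype V] [Fintype R] :
    fvcWeight (extendByConst R y c) = fvcWeight y + Rᶜ.ncard * c := by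
  rw [fvcWeight, fvcWeight, ← Fintype.sum_subtype_add_sum_subtype (· ∈ R)]
  congr 1
  · convert Finset.sum_congr rfl fun (v : R) _ => extendByConst_of_mem (c := c) v.2
  · rw [Finset.sum_congr rfl fun (v : {v // v ∉ R}) _ => extendByConst_of_notMem v.2,
      Finset.sum_const, Finset.card_univ, nsmul_eq_mul, ← Nat.card_eq_fintype_card,
      ← Nat.card_coe_set_eq]
    rfl

end extendByConst

end

theorem lp_after_removing_surplus_one_set_general {V : Type} [Fintype V] (G : SimpleGraph V)
    (hsur : SurplusGE G 1) (Z : Set V) (hZind : IndepSet G Z)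
    (hZsur : (nbhd G Z).ncard = Z.ncard + 1) :
    LPopt G - ((nbhd G Z).ncard : ℝ) + 1 / 2 ≤
      LPopt (G.induce ((Z ∪ nbhd G Z)ᶜ)) := by
  set R := (Z ∪ nbhd G Z)ᶜ
  refine le_LPopt fun y hy => ?_
  set x := extendByConst R y (1 / 2) with hx
  have hxR : ∀ v, x v < 1 / 2 → v ∈ R := fun v => mem_of_extendByConst_lt
  have hB : IndepSet G {v | x v < 1 / 2} := fun u (hu : x u < 1 / 2) v (hv : x v < 1 / 2) huv =>
    by linarith [one_le_extendByConst_add (c := 1 / 2) hy (hxR u hu) (hxR v hv) huv]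
  obtain ⟨f, hf, hfR⟩ := exists_injective_adj_of_forall_ncard_le fun T hT =>
    ncard_le_ncard_nbhd_inter_of_surplus hsur hZind hZsur.le (fun v hv => hxR v (hT hv))
      fun u hu v hv => hB u (hT hu) v (hT hv)
  obtain ⟨z, hz, hzx⟩ := exists_half_le_sum_le_of_injective x
    (extendByConst_le (fun v => (hy.1 v).2) (by norm_num)) f hf
    fun a => one_le_extendByConst_add hy (hxR a a.2) (hfR a).1 (hfR a).2
  have hS : (Rᶜ.ncard : ℝ) = 2 * (nbhd G Z).ncard - 1 := by
    rw [compl_compl, Set.ncard_union_eq (Set.disjoint_right.2 fun v hv => hv.1)]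
    push_cast [hZsur]
    ring
  calc LPopt G - (nbhd G Z).ncard + 1 / 2
      ≤ fvcWeight z - (nbhd G Z).ncard + 1 / 2 := by
        linarith [LPopt_le_fvcWeight (G := G) (isFVC_of_forall_half_le hz)]
    _ ≤ fvcWeight x - (nbhd G Z).ncard + 1 / 2 := by
        linarith [show fvcWeight z ≤ fvcWeight x from hzx]
    _ = fvcWeight y := by
        rw [hx, fvcWeight_extendByConst, hS]
        ring

/-- If `surplus(G) ≥ 1` and `Z` is a nonempty independent set with surplus one,
then `LP(G − (Z ∪ N(Z))) ≥ LP(G) − |N(Z)| + 1/2`. -/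
theorem lp_after_removing_surplus_one_set {V : Type} [Fintype V] (G : SimpleGraph V)
    (hsur : SurplusGE G 1) (Z : Set V) (hZne : Z.Nonempty) (hZind : IndepSet G Z)
    (hZsur : (nbhd G Z).ncard = Z.ncard + 1) :
    LPopt G - ((nbhd G Z).ncard : ℝ) + 1 / 2 ≤
      LPopt (G.induce ((Z ∪ nbhd G Z)ᶜ)) :=
  lp_after_removing_surplus_one_set_general G hsur Z hZind hZsur
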